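/- For every m ≥ 1 and every even n ≥ 2, the number of m-tuples (α_1,…,α_m) ∈ F_n^m that have overlapping matches is at most (4m⁴/n)·|F_n|^m; equivalently, a uniformly random element of F_n^m has no overlapping matches with probability at least 1 − 4m⁴/n. -/

import Mathlib

open scoped Classical

/-- The set of fixed-point-free involutions of `{1,…,n}` (modeled on `Fin n`). -/
noncomputable def fpf (n : ℕ) : Finset (Equiv.Perm (Fin n)) :=
  Finset.univ.filter (fun σ => σ * σ = 1 ∧ ∀ i, σ i ≠ i)

/-- A tuple `(α_1, …, α_m)` has overlapping matches if there are unordered pairs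
`{i,j} ≠ {i',j'}` with `i ≠ j`, `i' ≠ j'` and some `k` with `α_i(k) = α_j(k)` and
`α_{i'}(k) = α_{j'}(k)`. -/
def hasOverlappingMatches {m n : ℕ} (α : Fin m → Equiv.Perm (Fin n)) : Prop :=
  ∃ k : Fin n, ∃ i j i' j' : Fin m, i ≠ j ∧ i' ≠ j' ∧
    ({i, j} : Finset (Fin m)) ≠ ({i', j'} : Finset (Fin m)) ∧
    α i k = α j k ∧ α i' k = α j' k

/-!
Union bound over the at most `n m⁴` choices of a point `k` and two distinct pairs of indices.
Two distinct pairs force two independent constraints: there are `a ≠ b` and `c, d ∉ {a, b}` with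
`α_a(k) = α_c(k)` and `α_b(k) = α_d(k)`. Conjugating by the transposition `(v w)` shows that
`σ(k)` is uniformly distributed on the `n - 1` points `≠ k` as `σ` ranges over `F_n`, so once all
coordinates other than `a, b` are fixed each constraint holds with probability at most `1/(n-1)`.
Hence the count is at most `n m⁴ |F_n|^m / (n-1)² ≤ (4m⁴/n) |F_n|^m`, using `n ≤ 2(n - 1)`.
-/

open Finset

lemma mem_fpf {n : ℕ} {σ : Equiv.Perm (Fin n)} :
    σ ∈ fpf n ↔ σ * σ = 1 ∧ ∀ i, σ i ≠ i := by
  simp [fpf]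

lemma conj_mem_fpf {n : ℕ} {σ : Equiv.Perm (Fin n)} (hσ : σ ∈ fpf n) (τ : Equiv.Perm (Fin n)) :
    τ * σ * τ⁻¹ ∈ fpf n := by
  obtain ⟨hinv, hfree⟩ := mem_fpf.1 hσ
  refine mem_fpf.2 ⟨?_, fun i h => hfree (τ⁻¹ i) ?_⟩
  · calc τ * σ * τ⁻¹ * (τ * σ * τ⁻¹) = τ * (σ * σ) * τ⁻¹ := by group
      _ = 1 := by rw [hinv, mul_one, mul_inv_cancel]
  · rwa [Equiv.Perm.mul_apply, Equiv.Perm.mul_apply, ← Equiv.Perm.eq_inv_iff_eq] at h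

lemma card_fpf_filter_apply_eq {n : ℕ} {k v w : Fin n} (hv : v ≠ k) (hw : w ≠ k) :
    #{σ ∈ fpf n | σ k = v} = #{σ ∈ fpf n | σ k = w} := by
  have hk : Equiv.swap v w k = k := Equiv.swap_apply_of_ne_of_ne hv.symm hw.symm
  have conj_apply (σ : Equiv.Perm (Fin n)) :
      (Equiv.swap v w * σ * Equiv.swap v w) k = Equiv.swap v w (σ k) := by
    simp [Equiv.Perm.mul_apply, hk]
  have conj_mem (σ : Equiv.Perm (Fin n)) (hσ : σ ∈ fpf n) :
      Equiv.swap v w * σ * Equiv.swap v w ∈ fpf n := by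
    simpa using conj_mem_fpf hσ (Equiv.swap v w)
  refine card_nbij' (fun σ => Equiv.swap v w * σ * Equiv.swap v w)
    (fun σ => Equiv.swap v w * σ * Equiv.swap v w) ?_ ?_ ?_ ?_
  · intro σ hσ
    simp only [coe_filter, Set.mem_ofPred_eq] at hσ ⊢
    exact ⟨conj_mem σ hσ.1, by rw [conj_apply, hσ.2, Equiv.swap_apply_left]⟩
  · intro σ hσ
    simp only [coe_filter, Set.mem_ofPred_eq] at hσ ⊢
    exact ⟨conj_mem σ hσ.1, by rw [conj_apply, hσ.2, Equiv.swap_apply_right]⟩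
  all_goals intro σ _; simp [mul_assoc]

lemma sub_one_mul_card_fpf_filter_apply_le {n : ℕ} (k w : Fin n) :
    (n - 1) * #{σ ∈ fpf n | σ k = w} ≤ #(fpf n) := by
  by_cases hw : w = k
  · subst hw
    simp [filter_eq_empty_iff.2 fun σ hσ => (mem_fpf.1 hσ).2 w]
  calc (n - 1) * #{σ ∈ fpf n | σ k = w}
      = ∑ v ∈ univ.erase k, #{σ ∈ fpf n | σ k = v} := by
        rw [sum_congr rfl fun v hv => card_fpf_filter_apply_eq (mem_erase.1 hv).1 hw,
          sum_const, card_erase_of_mem (mem_univ k), card_univ, Fintype.card_fin, smul_eq_mul]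
    _ ≤ ∑ v, #{σ ∈ fpf n | σ k = v} := sum_le_sum_of_subset (erase_subset k univ)
    _ = #(fpf n) := (card_eq_sum_card_fiberwise fun σ _ => mem_univ (σ k)).symm

lemma sq_mul_card_filter_piFinset_le {ι β : Type*} [Fintype ι] [DecidableEq ι]
    (s : Finset β) (p : β → β → Prop) [DecidableRel p] (N : ℕ)
    (hp : ∀ y, N * #{x ∈ s | p x y} ≤ #s) {a b c d : ι} (hab : a ≠ b)
    (hca : c ≠ a) (hcb : c ≠ b) (hda : d ≠ a) (hdb : d ≠ b) :
    N ^ 2 * #{α ∈ Fintype.piFinset fun _ => s | p (α a) (α c) ∧ p (α b) (α d)}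
      ≤ #s ^ Fintype.card ι := by
  let R := {t // t ∉ ({a, b} : Finset ι)}
  let c' : R := ⟨c, by simp [hca, hcb]⟩
  let d' : R := ⟨d, by simp [hda, hdb]⟩
  have card_R : Fintype.card R + 2 = Fintype.card ι := by
    have := card_le_univ ({a, b} : Finset ι)
    rw [Fintype.card_subtype_compl, Fintype.card_coe, card_pair hab] at *
    omega
  -- a tuple is determined by its restriction to `R` together with its values at `a` and `b`
  have h_inj : #{α ∈ Fintype.piFinset fun _ => s | p (α a) (α c) ∧ p (α b) (α d)}
      ≤ #((Fintype.piFinset fun _ : R => s).sigma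
          fun g => {x ∈ s | p x (g c')} ×ˢ {x ∈ s | p x (g d')}) := by
    refine card_le_card_of_injOn (fun α => ⟨fun t => α t, α a, α b⟩) ?_ ?_
    · intro α hα
      simp only [coe_filter, Fintype.mem_piFinset, Set.mem_ofPred_eq] at hα
      simp [hα.1, hα.2, c', d']
    · intro α₁ _ α₂ _ h
      simp only [Sigma.mk.inj_iff, heq_iff_eq, Prod.mk.injEq] at h
      obtain ⟨hR, ha, hb⟩ := h
      funext t
      by_cases hta : t = a
      · rwa [hta]
      by_cases htb : t = b
      · rwa [htb]
      exact congrFun hR ⟨t, by simp [hta, htb]⟩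
  calc N ^ 2 * #{α ∈ Fintype.piFinset fun _ => s | p (α a) (α c) ∧ p (α b) (α d)}
      ≤ ∑ g ∈ Fintype.piFinset fun _ : R => s,
          (N * #{x ∈ s | p x (g c')}) * (N * #{x ∈ s | p x (g d')}) := by
        grw [h_inj, card_sigma, mul_sum]
        simp only [card_product]
        exact le_of_eq (sum_congr rfl fun _ _ => by ring)
    _ ≤ ∑ _g ∈ Fintype.piFinset fun _ : R => s, #s * #s :=
        sum_le_sum fun g _ => Nat.mul_le_mul (hp _) (hp _)
    _ = #s ^ Fintype.card ι := by
        rw [sum_const, Fintype.card_piFinset, prod_const, card_univ, smul_eq_mul, ← card_R]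
        ring

lemma exists_apply_eq_of_pair_ne {ι X : Type*} [DecidableEq ι] {f : ι → X} {i j i' j' : ι}
    (hij : i ≠ j) (hij' : i' ≠ j') (hne : ({i, j} : Finset ι) ≠ {i', j'})
    (h : f i = f j) (h' : f i' = f j') :
    ∃ a b c d : ι, a ≠ b ∧ c ≠ a ∧ c ≠ b ∧ d ≠ a ∧ d ≠ b ∧ f a = f c ∧ f b = f d := by
  -- some `x ∈ {i, j}` lies outside `{i', j'}`; let `y` be the other element of `{i, j}`
  obtain ⟨x, y, hxy, hxi', hxj', hfxy⟩ :
      ∃ x y, x ≠ y ∧ x ≠ i' ∧ x ≠ j' ∧ f x = f y := by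
    by_cases hi : i = i' ∨ i = j'
    · by_cases hj : j = i' ∨ j = j'
      · exfalso
        rcases hi with rfl | rfl <;> rcases hj with rfl | rfl <;> simp_all [pair_comm]
      · push Not at hj
        exact ⟨j, i, hij.symm, hj.1, hj.2, h.symm⟩
    · push Not at hi
      exact ⟨i, j, hij, hi.1, hi.2, h⟩
  by_cases hyi' : y = i'
  · subst hyi'
    exact ⟨x, j', y, y, hxj', hxy.symm, hij', hxy.symm, hij', hfxy, h'.symm⟩
  · exact ⟨x, i', y, j', hxi', hxy.symm, hyi', Ne.symm hxj', hij'.symm, hfxy, h'⟩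

lemma hasOverlappingMatches.exists_apply_eq {m n : ℕ} {α : Fin m → Equiv.Perm (Fin n)}
    (h : hasOverlappingMatches α) :
    ∃ k a b c d, a ≠ b ∧ c ≠ a ∧ c ≠ b ∧ d ≠ a ∧ d ≠ b ∧ α a k = α c k ∧ α b k = α d k := by
  obtain ⟨k, i, j, i', j', hij, hij', hne, hk, hk'⟩ := h
  exact ⟨k, exists_apply_eq_of_pair_ne (f := fun t => α t k) hij hij' hne hk hk'⟩

lemma le_four_mul_div_of_sub_one_sq_mul_le {n L M : ℕ} (hn : 2 ≤ n)
    (h : (n - 1) ^ 2 * L ≤ n * M) : (L : ℝ) ≤ 4 * M / n := by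
  have hn_sq : n * n ≤ 4 * (n - 1) ^ 2 := by
    zify [(by omega : 1 ≤ n)]
    nlinarith
  have hnL : n * L ≤ 4 * M := by
    refine Nat.le_of_mul_le_mul_left ?_ (by omega : 0 < n)
    calc n * (n * L) = n * n * L := by ring
      _ ≤ 4 * ((n - 1) ^ 2 * L) := by rw [← mul_assoc]; gcongr
      _ ≤ n * (4 * M) := by linarith
  rw [le_div_iff₀ (by positivity), mul_comm]
  exact_mod_cast hnL

lemma sub_one_sq_mul_card_overlapping_matches_le (m n : ℕ) :
    (n - 1) ^ 2 * #(univ.filter fun α : Fin m → Equiv.Perm (Fin n) =>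
        (∀ i, α i ∈ fpf n) ∧ hasOverlappingMatches α)
      ≤ n * (m ^ 4 * #(fpf n) ^ m) := by
  let Q : Finset (Fin n × Fin m × Fin m × Fin m × Fin m) :=
    univ.filter fun ⟨_, a, b, c, d⟩ => a ≠ b ∧ c ≠ a ∧ c ≠ b ∧ d ≠ a ∧ d ≠ b
  let S : Fin n × Fin m × Fin m × Fin m × Fin m → Finset (Fin m → Equiv.Perm (Fin n)) :=
    fun ⟨k, a, b, c, d⟩ => {α ∈ Fintype.piFinset fun _ => fpf n | α a k = α c k ∧ α b k = α d k}
  have h_union : univ.filter (fun α : Fin m → Equiv.Perm (Fin n) =>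
      (∀ i, α i ∈ fpf n) ∧ hasOverlappingMatches α) ⊆ Q.biUnion S := by
    intro α hα
    obtain ⟨hF, hα⟩ := (mem_filter.1 hα).2
    obtain ⟨k, a, b, c, d, hab, hca, hcb, hda, hdb, hac, hbd⟩ := hα.exists_apply_eq
    exact mem_biUnion.2 ⟨(k, a, b, c, d), by simp [Q, hab, hca, hcb, hda, hdb],
      by simp [S, hF, hac, hbd]⟩
  have h_piece : ∀ q ∈ Q, (n - 1) ^ 2 * #(S q) ≤ #(fpf n) ^ m := by
    rintro ⟨k, a, b, c, d⟩ hq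
    obtain ⟨hab, hca, hcb, hda, hdb⟩ := (mem_filter.1 hq).2
    simpa using sq_mul_card_filter_piFinset_le (fpf n) (fun σ τ => σ k = τ k) (n - 1)
      (fun τ => sub_one_mul_card_fpf_filter_apply_le k (τ k)) hab hca hcb hda hdb
  have h_card_Q : #Q ≤ n * m ^ 4 :=
    (card_filter_le _ _).trans_eq <| by
      simp only [card_univ, Fintype.card_prod, Fintype.card_fin]; ring
  calc (n - 1) ^ 2 * #(univ.filter fun α : Fin m → Equiv.Perm (Fin n) =>
          (∀ i, α i ∈ fpf n) ∧ hasOverlappingMatches α)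
      ≤ ∑ q ∈ Q, (n - 1) ^ 2 * #(S q) := by grw [h_union, card_biUnion_le, mul_sum]
    _ ≤ #Q * #(fpf n) ^ m := by grw [sum_le_sum h_piece, sum_const, smul_eq_mul]
    _ ≤ n * (m ^ 4 * #(fpf n) ^ m) := by grw [h_card_Q, mul_assoc]

theorem card_overlapping_matches_le_general (m n : ℕ) (h2 : 2 ≤ n) :
    ((Finset.univ.filter (fun α : Fin m → Equiv.Perm (Fin n) =>
        (∀ i, α i ∈ fpf n) ∧ hasOverlappingMatches α)).card : ℝ)
      ≤ (4 * m ^ 4 / n) * ((fpf n).card : ℝ) ^ m := by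
  rw [div_mul_eq_mul_div, mul_assoc]
  exact_mod_cast le_four_mul_div_of_sub_one_sq_mul_le h2
    (sub_one_sq_mul_card_overlapping_matches_le m n)

/-- The number of `m`-tuples of fixed-point-free involutions of `{1,…,n}` with
overlapping matches is at most `(4m⁴/n)·|F_n|^m`. -/
theorem card_overlapping_matches_le (m n : ℕ) (hm : 1 ≤ m) (hn : Even n) (h2 : 2 ≤ n) :
    ((Finset.univ.filter (fun α : Fin m → Equiv.Perm (Fin n) =>
        (∀ i, α i ∈ fpf n) ∧ hasOverlappingMatches α)).card : ℝ)
      ≤ (4 * m ^ 4 / n) * ((fpf n).card : ℝ) ^ m :=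
  card_overlapping_matches_le_general m n h2
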